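/- Define h : ℝ → ℝ by h(x) = log((x+2)(2−x)/x²) for 0 < x ≤ 1 and h(x) = 0 otherwise. Then h is locally integrable but is not of bounded mean oscillation on ℝ: sup_I (1/|I|) ∫_I |h(x) − Avg_I h| dx = ∞, the supremum taken over all bounded intervals I of positive length; equivalently, for every C > 0 there exists a bounded interval I of positive length with (1/|I|) ∫_I |h(x) − Avg_I h| dx > C. (This is the core of the paper's Proposition 5.1, which shows that for n = 1 there exist compactly supported f, g ∈ L^∞ and an order-zero amplitude such that the bilinear Fourier integral operator with phases φ1(x,ξ) = xξ + |ξ| and φ2(x,η) = xη applied to (f,g) fails to lie in BMO.) -/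

import Mathlib

open MeasureTheory
open scoped ENNReal NNReal

noncomputable section

/-- The function `h(x) = log((x+2)(2-x)/x²)` for `0 < x ≤ 1`, extended by `0`:
the imaginary part (up to a constant) of the model one-dimensional bilinear FIO
output appearing in Proposition 5.1 of the paper. -/
def hfun (x : ℝ) : ℝ :=
  if 0 < x ∧ x ≤ 1 then Real.log ((x + 2) * (2 - x) / x ^ 2) else 0

/-!
Near `0⁺` the function `h` behaves like `-2 log x`, while it vanishes to the left of `0`.
On `I = (-ε, ε)` its average is therefore at least `1 - log ε`, and since `h = 0` on the
left half of `I`, the mean oscillation over `I` is at least half of that average, which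
tends to `∞` as `ε → 0`.
-/

open Set Real

theorem measureReal_mul_abs_le_setIntegral_abs_sub {X : Type*} [MeasurableSpace X]
    {μ : Measure X} {f : X → ℝ} {s t : Set X} (A : ℝ) (hs : MeasurableSet s) (hst : s ⊆ t)
    (ht : μ t ≠ ∞) (hf : IntegrableOn f t μ) (hzero : EqOn f 0 s) :
    μ.real s * |A| ≤ ∫ x in t, |f x - A| ∂μ := by
  have hint : IntegrableOn (fun x => |f x - A|) t μ :=
    (hf.sub (integrableOn_const ht)).abs
  calc μ.real s * |A| = ∫ x in s, |f x - A| ∂μ := by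
        rw [setIntegral_congr_fun hs (g := fun _ => |A|) fun x hx => by simp [hzero hx],
          setIntegral_const, smul_eq_mul]
    _ ≤ ∫ x in t, |f x - A| ∂μ :=
        setIntegral_mono_set hint (ae_of_all _ fun _ => abs_nonneg _) hst.eventuallyLE

lemma hfun_of_mem_Ioc {x : ℝ} (hx : x ∈ Ioc 0 1) :
    hfun x = log ((x + 2) * (2 - x)) - 2 * log x := by
  have h1 : 0 < x + 2 := by linarith [hx.1]
  have h2 : 0 < 2 - x := by linarith [hx.2]
  rw [hfun, if_pos (show 0 < x ∧ x ≤ 1 from hx),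
    log_div (by positivity) (pow_ne_zero 2 hx.1.ne'), log_pow]
  push_cast
  ring

lemma hfun_of_notMem_Ioc {x : ℝ} (hx : x ∉ Ioc 0 1) : hfun x = 0 :=
  if_neg hx

lemma neg_two_mul_log_le_hfun {x : ℝ} (hx : x ∈ Ioc 0 1) : -(2 * log x) ≤ hfun x := by
  rw [hfun_of_mem_Ioc hx]
  linarith [log_nonneg (show 1 ≤ (x + 2) * (2 - x) by nlinarith [hx.1, hx.2])]

lemma hfun_nonneg (x : ℝ) : 0 ≤ hfun x := by
  by_cases hx : x ∈ Ioc 0 1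
  · linarith [neg_two_mul_log_le_hfun hx, log_nonpos hx.1.le hx.2]
  · rw [hfun_of_notMem_Ioc hx]

lemma integrableOn_neg_two_mul_log {a b : ℝ} (hab : a ≤ b) :
    IntegrableOn (fun x => -(2 * log x)) (Ioc a b) :=
  ((intervalIntegrable_iff_integrableOn_Ioc_of_le hab).1
    intervalIntegral.intervalIntegrable_log').const_mul 2 |>.neg

lemma hfun_integrable : Integrable hfun := by
  rw [← integrableOn_iff_integrable_of_support_subset
    fun x hx => not_not.1 fun h => hx (hfun_of_notMem_Ioc h)]
  have hcont : IntegrableOn (fun x => log ((x + 2) * (2 - x))) (Ioc 0 1) := by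
    refine (ContinuousOn.integrableOn_compact isCompact_Icc ?_).mono_set Ioc_subset_Icc_self
    refine ContinuousOn.log (by fun_prop) fun x hx => ?_
    nlinarith [hx.1, hx.2]
  refine (hcont.add (integrableOn_neg_two_mul_log zero_le_one)).congr_fun (fun x hx => ?_)
    measurableSet_Ioc
  rw [hfun_of_mem_Ioc hx, Pi.add_apply]
  ring

lemma setIntegral_hfun_Ioo_ge {ε : ℝ} (hε0 : 0 < ε) (hε1 : ε ≤ 1) :
    2 * ε * (1 - log ε) ≤ ∫ x in Ioo (-ε) ε, hfun x := by
  have hlog : ∫ x in Ioc 0 ε, -(2 * log x) = 2 * ε * (1 - log ε) := by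
    rw [integral_neg, integral_const_mul, ← intervalIntegral.integral_of_le hε0.le, integral_log]
    simp only [zero_mul, sub_zero, add_zero]
    ring
  calc 2 * ε * (1 - log ε) = ∫ x in Ioo 0 ε, -(2 * log x) := by
        rw [← hlog, integral_Ioc_eq_integral_Ioo]
    _ ≤ ∫ x in Ioo 0 ε, hfun x :=
        setIntegral_mono_on (integrableOn_neg_two_mul_log hε0.le |>.mono_set Ioo_subset_Ioc_self)
          hfun_integrable.integrableOn measurableSet_Ioo
          fun x hx => neg_two_mul_log_le_hfun ⟨hx.1, hx.2.le.trans hε1⟩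
    _ ≤ ∫ x in Ioo (-ε) ε, hfun x :=
        setIntegral_mono_set hfun_integrable.integrableOn (ae_of_all _ hfun_nonneg)
          (Ioo_subset_Ioo_left (by linarith)).eventuallyLE

lemma one_sub_log_le_setAverage_hfun {ε : ℝ} (hε0 : 0 < ε) (hε1 : ε ≤ 1) :
    1 - log ε ≤ ⨍ x in Ioo (-ε) ε, hfun x := by
  rw [setAverage_eq, volume_real_Ioo_of_le (by linarith), smul_eq_mul, sub_neg_eq_add,
    ← two_mul, le_inv_mul_iff₀ (by positivity)]
  exact setIntegral_hfun_Ioo_ge hε0 hε1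

/-- **Core of Proposition 5.1 (failure of the `L^∞ × L^∞ → BMO` endpoint in
dimension one).**  The function `hfun` is locally integrable but has infinite BMO
seminorm: its mean oscillation over bounded intervals is unbounded. -/
theorem hfun_locallyIntegrable_not_BMO :
    LocallyIntegrable hfun volume ∧
      ∀ C : ℝ, 0 < C → ∃ a b : ℝ, a < b ∧
        (b - a)⁻¹ * ∫ x in Set.Ioo a b, |hfun x - ⨍ y in Set.Ioo a b, hfun y| > C := by
  refine ⟨hfun_integrable.locallyIntegrable, fun C hC => ?_⟩
  set ε := exp (-(2 * C))
  have hε0 : 0 < ε := exp_pos _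
  have hε1 : ε ≤ 1 := exp_le_one_iff.2 (by linarith)
  refine ⟨-ε, ε, by linarith, ?_⟩
  set A := ⨍ y in Ioo (-ε) ε, hfun y
  have hA : 1 + 2 * C ≤ A := by
    simpa [ε, log_exp] using one_sub_log_le_setAverage_hfun hε0 hε1
  have hosc : ε * A ≤ ∫ x in Ioo (-ε) ε, |hfun x - A| := by
    have := measureReal_mul_abs_le_setIntegral_abs_sub A (measurableSet_Ioo (a := -ε) (b := 0))
      (Ioo_subset_Ioo_right hε0.le) measure_Ioo_lt_top.ne hfun_integrable.integrableOn
      fun x hx => hfun_of_notMem_Ioc fun h => hx.2.not_gt h.1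
    rwa [volume_real_Ioo_of_le (by linarith), abs_of_nonneg (by linarith), zero_sub,
      neg_neg] at this
  rw [sub_neg_eq_add, ← two_mul, gt_iff_lt, lt_inv_mul_iff₀ (by positivity)]
  nlinarith
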